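/- arXiv:2107.03494 — 6 statements merged into one kernel-verified Lean document; each statement's English description precedes it below -/
import Mathlib

section
/- Let d ≥ 2, D = C(d,2). Let g: [0,∞) → ℝ be concave and increasing, differentiable on (0,∞) with finite right derivative g'(0+) at 0. For any b, β ∈ ℝ^D, let λ ∈ ℝ^d be the eigenvalues of ℒ(|b|), let V ∈ ℝ^{d×d} be any orthogonal matrix whose k-th column is an eigenvector of ℒ(|b|) with eigenvalue λ_k, and let w ∈ ℝ^d be given by w_k = g'(λ_k) (using g'(0+) when λ_k = 0). Then the linearized-majorization inequality holds: Σ_{j=1}^d g(λ_j(ℒ(|β|))) ≤ Σ_{j=1}^d g(λ_j(ℒ(|b|))) + Σ_{(ij)} ℳ(V, w)_{(ij)} · (|β_{(ij)}| − |b_{(ij)}|); in particular, the weighted-ℓ1 surrogate Q(β | b) := ½ ℳ(V, w)ᵀ|β| + constants(b) majorizes the folded concave Laplacian spectral penalty ½ Σ_j g(λ_j(ℒ(|β|))) with equality at β = b. -/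
open scoped BigOperators
open Matrix

namespace FCLS

/-- Edge index: pairs `(i, j)` with `i < j`. -/
abbrev EdgeIdx (d : ℕ) := {p : Fin d × Fin d // p.1 < p.2}

/-- Hollow symmetric adjacency matrix attached to an edge vector. -/
def adjM {d : ℕ} (x : EdgeIdx d → ℝ) : Matrix (Fin d) (Fin d) ℝ :=
  Matrix.of fun i j =>
    if h : i < j then x ⟨(i, j), h⟩ else if h' : j < i then x ⟨(j, i), h'⟩ else 0

/-- Graph Laplacian of a square matrix. -/
def lapM {n : Type*} [Fintype n] [DecidableEq n] (A : Matrix n n ℝ) : Matrix n n ℝ :=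
  Matrix.diagonal (fun i => ∑ j, A i j) - A

/-- Graph Laplacian of an edge vector. -/
def lap {d : ℕ} (x : EdgeIdx d → ℝ) : Matrix (Fin d) (Fin d) ℝ := lapM (adjM x)

/-- Eigenvalues sorted in nondecreasing order (`0` when not Hermitian). -/
noncomputable def eigs {n : Type*} [Fintype n] [DecidableEq n] (A : Matrix n n ℝ) :
    Fin (Fintype.card n) → ℝ :=
  if hA : A.IsHermitian then
    (fun v : Fin (Fintype.card n) → ℝ => v ∘ Tuple.sort v)
      (hA.eigenvalues ∘ (Fintype.equivFin n).symm)
  else 0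

/-- `j`-th smallest eigenvalue, `1`-indexed. -/
noncomputable def eigAsc {n : Type*} [Fintype n] [DecidableEq n] (A : Matrix n n ℝ) (j : ℕ) : ℝ :=
  if h : j - 1 < Fintype.card n then eigs A ⟨j - 1, h⟩ else 0

/-- Laplacian coefficient `ℳ(V, w)`. -/
def lapCoeff {d K : ℕ} (V : Matrix (Fin d) (Fin K) ℝ) (w : Fin K → ℝ) : EdgeIdx d → ℝ :=
  fun e => ∑ k, w k * (V e.1.1 k - V e.1.2 k) ^ 2

/-- Support graph of an edge vector. -/
def suppGraph {d : ℕ} (x : EdgeIdx d → ℝ) : SimpleGraph (Fin d) :=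
  SimpleGraph.fromRel fun i j => ∃ h : i < j, x ⟨(i, j), h⟩ ≠ 0

/-- Support graph of a square matrix. -/
def suppGraphM {d : ℕ} (A : Matrix (Fin d) (Fin d) ℝ) : SimpleGraph (Fin d) :=
  SimpleGraph.fromRel fun i j => A i j ≠ 0

/-- Block support: edges whose endpoints lie in a common connected component
of the support graph. -/
def blockSupp {d : ℕ} (x : EdgeIdx d → ℝ) : Set (EdgeIdx d) :=
  {e | (suppGraph x).Reachable e.1.1 e.1.2}

/-- Number of vertices in the connected component of `i`. -/
noncomputable def compCard {d : ℕ} (G : SimpleGraph (Fin d)) (i : Fin d) : ℕ :=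
  Nat.card {j : Fin d // G.Reachable i j}

/-- Largest connected-component size. -/
noncomputable def maxCompCard {d : ℕ} (G : SimpleGraph (Fin d)) : ℕ :=
  Finset.univ.sup fun i => compCard G i

/-- Number of connected components. -/
noncomputable def numComp {d : ℕ} (G : SimpleGraph (Fin d)) : ℕ :=
  Nat.card G.ConnectedComponent

open Classical in
/-- Restriction of an edge vector to edges inside a vertex set. -/
noncomputable def restrictE {d : ℕ} (x : EdgeIdx d → ℝ) (S : Set (Fin d)) : EdgeIdx d → ℝ :=
  fun e => if e.1.1 ∈ S ∧ e.1.2 ∈ S then x e else 0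

/-- `j`-th smallest eigenvalue (1-indexed) of the Laplacian of the adjacency
submatrix on the vertex set `S`. -/
noncomputable def subLapEig {d : ℕ} (x : EdgeIdx d → ℝ) (S : Set (Fin d)) (j : ℕ) : ℝ :=
  letI : Fintype S := Fintype.ofFinite S
  eigAsc (lapM ((adjM x).submatrix (fun a : S => (a : Fin d)) fun a : S => (a : Fin d))) j

/-- Spectral (`ℓ2 → ℓ2` operator) norm of a matrix. -/
noncomputable def opNorm {m n : Type*} [Fintype m] [Fintype n] [DecidableEq n]
    (A : Matrix m n ℝ) : ℝ :=
  ‖LinearMap.toContinuousLinearMap (Matrix.toEuclideanLin A)‖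

/-- Entrywise `ℓ1` norm of a matrix. -/
noncomputable def matL1 {m n : Type*} [Fintype m] [Fintype n] (A : Matrix m n ℝ) : ℝ :=
  ∑ i, ∑ j, |A i j|

/-- Frobenius norm of a matrix. -/
noncomputable def frob {m n : Type*} [Fintype m] [Fintype n] (A : Matrix m n ℝ) : ℝ :=
  Real.sqrt (∑ i, ∑ j, A i j ^ 2)

/-- `ℓ1 → ℓ1` operator norm: maximal absolute row sum. -/
noncomputable def opOne {m n : Type*} [Fintype m] [Fintype n] (A : Matrix m n ℝ) : ℝ :=
  ⨆ i, ∑ j, |A i j|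

/-- `ℓ2 → ℓ∞` operator norm: maximal Euclidean row norm. -/
noncomputable def twoInf {m n : Type*} [Fintype m] [Fintype n] (A : Matrix m n ℝ) : ℝ :=
  ⨆ i, Real.sqrt (∑ j, A i j ^ 2)

/-- Max (absolute) entry of a vector. -/
noncomputable def vecMax {ι : Type*} [Fintype ι] (v : ι → ℝ) : ℝ := ⨆ i, |v i|

/-- `ℓ1` norm of a vector. -/
noncomputable def l1 {ι : Type*} [Fintype ι] (v : ι → ℝ) : ℝ := ∑ i, |v i|

/-- `ℓ2` norm of a vector. -/
noncomputable def l2 {ι : Type*} [Fintype ι] (v : ι → ℝ) : ℝ := Real.sqrt (∑ i, v i ^ 2)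

/-- SCAD-like folded concave penalty `g` with (within-domain) derivative `g'`. -/
structure SCADLike (g g' : ℝ → ℝ) (a0 a1 b1 b2 τ : ℝ) : Prop where
  a1_le_a0 : a1 ≤ a0
  a1_pos : 0 < a1
  b1_pos : 0 < b1
  b1_lt_b2 : b1 < b2
  map_zero : g 0 = 0
  mono : MonotoneOn g (Set.Ici 0)
  concave : ConcaveOn ℝ (Set.Ici 0) g
  hasDeriv : ∀ t ∈ Set.Ici (0 : ℝ), HasDerivWithinAt g (g' t) (Set.Ici 0) t
  deriv_zero : g' 0 = a0 * τ
  deriv_low : ∀ t : ℝ, 0 < t → t ≤ b1 * τ → a1 * τ ≤ g' t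
  deriv_high : ∀ t : ℝ, b2 * τ ≤ t → g' t = 0

/-- `(V, lam)` is an orthonormal eigendecomposition of `A`. -/
def IsEigenDecomp {d : ℕ} (A V : Matrix (Fin d) (Fin d) ℝ) (lam : Fin d → ℝ) : Prop :=
  Vᵀ * V = 1 ∧ ∀ k, A *ᵥ (fun i => V i k) = lam k • fun i => V i k

/-- LLA surrogate objective with weight vector `M`. -/
noncomputable def llaObj {d : ℕ} (ℓ : (EdgeIdx d → ℝ) → ℝ) (M β : EdgeIdx d → ℝ) : ℝ :=
  ℓ β + (1 / 2) * ∑ e, M e * |β e|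

/-- `out` is the output of one LLA step from `b` (for some orthonormal
eigendecomposition of `ℒ(|b|)`). -/
def LLAStep {d : ℕ} (ℓ : (EdgeIdx d → ℝ) → ℝ) (g' : ℝ → ℝ) (b out : EdgeIdx d → ℝ) : Prop :=
  ∃ V lam, IsEigenDecomp (lap fun e => |b e|) V lam ∧
    ∀ β, llaObj ℓ (lapCoeff V fun k => g' (lam k)) out ≤
      llaObj ℓ (lapCoeff V fun k => g' (lam k)) β

/-- `β` solves the weighted Lasso block-oracle problem with weights `w`. -/
def OrcLassoSol {d : ℕ} (ℓ : (EdgeIdx d → ℝ) → ℝ) (S : Set (EdgeIdx d))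
    (w β : EdgeIdx d → ℝ) : Prop :=
  (∀ e ∉ S, β e = 0) ∧
  ∀ γ : EdgeIdx d → ℝ, (∀ e ∉ S, γ e = 0) →
    ℓ β + (1 / 2) * ∑ e, w e * |β e| ≤ ℓ γ + (1 / 2) * ∑ e, w e * |γ e|

/-- The set `T_op(ρ, τ)` of weighted-Lasso-oracle solutions with small weights. -/
def TopSet {d : ℕ} (ℓ : (EdgeIdx d → ℝ) → ℝ) (S : Set (EdgeIdx d))
    (a0 τ ρ : ℝ) : Set (EdgeIdx d → ℝ) :=
  {β | ∃ w : EdgeIdx d → ℝ, (∀ e, 0 ≤ w e) ∧ (∀ e ∉ S, w e = 0) ∧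
      (∀ e, w e ≤ 2 ^ 5 * a0 * τ * ρ ^ 2) ∧ OrcLassoSol ℓ S w β}

end FCLS

/-!
Let `μ` be the spectrum of `ℒ(|β|)`, `U` an orthonormal eigenbasis of it, and `vⱼ` the columns
of `V`, eigenvectors of `ℒ(|b|)` for `λⱼ`. The matrix `P k j = ((Uᵀ V) k j)²` is doubly stochastic
and `vⱼᵀ ℒ(|β|) vⱼ = ∑ₖ P k j μₖ`. Averaging the tangent inequalities
`g μₖ ≤ g λⱼ + g' λⱼ (μₖ - λⱼ)` of the concave `g` with the weights `P k j` gives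
`∑ₖ g μₖ ≤ ∑ⱼ (g λⱼ + g' λⱼ (vⱼᵀ ℒ(|β|) vⱼ - λⱼ))`, and the Laplacian quadratic form
`vᵀ ℒ(x) v = ∑ₑ xₑ (vᵢ - vⱼ)²` rewrites the correction term as `ℳ(V, g' ∘ λ)ᵀ (|β| - |b|)`.
The given `λ` is a rearrangement of the sorted spectrum of `ℒ(|b|)`: both are the roots of its
characteristic polynomial.
-/

open Finset

theorem ConcaveOn.le_add_mul_sub_of_hasDerivWithinAt {S : Set ℝ} {g : ℝ → ℝ} {x y g'x : ℝ}
    (hg : ConcaveOn ℝ S g) (hx : x ∈ S) (hy : y ∈ S) (hd : HasDerivWithinAt g g'x S x) :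
    g y ≤ g x + g'x * (y - x) := by
  rcases lt_trichotomy x y with h | rfl | h
  · have := hg.slope_le_of_hasDerivWithinAt hx hy h hd
    rw [slope_def_field, div_le_iff₀ (sub_pos.2 h)] at this
    linarith
  · simp
  · have := hg.le_slope_of_hasDerivWithinAt hy hx h hd
    rw [slope_def_field, le_div_iff₀ (sub_pos.2 h)] at this
    linarith

theorem sum_sum_eq_sum_lt_add_swap {ι M : Type*} [Fintype ι] [LinearOrder ι] [AddCommMonoid M]
    (f : ι → ι → M) (hf : ∀ i, f i i = 0) :
    ∑ i, ∑ j, f i j = ∑ p : {p : ι × ι // p.1 < p.2}, (f p.1.1 p.1.2 + f p.1.2 p.1.1) := by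
  have hsplit : ∀ p : ι × ι,
      f p.1 p.2 = (if p.1 < p.2 then f p.1 p.2 else 0) + (if p.2 < p.1 then f p.1 p.2 else 0) := by
    rintro ⟨i, j⟩
    rcases lt_trichotomy i j with h | h | h
    · simp [h, h.not_gt]
    · simp [h, hf]
    · simp [h, h.not_gt]
  have hswap : ∑ p : ι × ι, (if p.2 < p.1 then f p.1 p.2 else 0) =
      ∑ p : ι × ι, (if p.1 < p.2 then f p.2 p.1 else 0) :=
    Fintype.sum_equiv (Equiv.prodComm ι ι) _ _ fun _ => rfl
  rw [← Fintype.sum_prod_type', Fintype.sum_congr _ _ hsplit, sum_add_distrib, hswap,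
    ← sum_add_distrib]
  simp_rw [← ite_add_zero]
  rw [← sum_filter, sum_subtype (p := fun p : ι × ι => p.1 < p.2) _ (by simp)]

namespace Matrix

variable {n : Type*} [Fintype n] [DecidableEq n]

theorem sum_le_sum_add_tangent_of_mem_doublyStochastic {S : Set ℝ} {g g' : ℝ → ℝ}
    (htan : ∀ s ∈ S, ∀ t ∈ S, g t ≤ g s + g' s * (t - s))
    {P : Matrix n n ℝ} (hP : P ∈ doublyStochastic ℝ n) {μ lam : n → ℝ}
    (hμ : ∀ k, μ k ∈ S) (hlam : ∀ j, lam j ∈ S) :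
    ∑ k, g (μ k) ≤ ∑ j, (g (lam j) + g' (lam j) * (∑ k, P k j * μ k - lam j)) :=
  calc ∑ k, g (μ k) = ∑ j, ∑ k, P k j * g (μ k) := by
        rw [sum_comm]
        simp_rw [← sum_mul, sum_row_of_mem_doublyStochastic hP, one_mul]
    _ ≤ ∑ j, ∑ k, P k j * (g (lam j) + g' (lam j) * (μ k - lam j)) :=
        sum_le_sum fun j _ => sum_le_sum fun k _ =>
          mul_le_mul_of_nonneg_left (htan _ (hlam j) _ (hμ k)) (nonneg_of_mem_doublyStochastic hP)
    _ = ∑ j, (g (lam j) + g' (lam j) * (∑ k, P k j * μ k - lam j)) := by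
        refine sum_congr rfl fun j _ => ?_
        have hcol := sum_col_of_mem_doublyStochastic hP j
        have hterm : ∀ k, P k j * (g (lam j) + g' (lam j) * (μ k - lam j)) =
            g (lam j) * P k j + g' (lam j) * (P k j * μ k) - g' (lam j) * lam j * P k j :=
          fun k => by ring
        simp only [hterm, sum_sub_distrib, sum_add_distrib, ← mul_sum, hcol]
        ring

theorem sq_entries_mem_doublyStochastic {W : Matrix n n ℝ} (hW : Wᵀ * W = 1) :
    of (fun i j => W i j ^ 2) ∈ doublyStochastic ℝ n := by
  have hW' : W * Wᵀ = 1 := mul_eq_one_comm.mp hW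
  refine mem_doublyStochastic_iff_sum.2 ⟨fun i j => sq_nonneg _, fun i => ?_, fun j => ?_⟩
  · simpa [mul_apply, sq] using congrFun (congrFun hW' i) i
  · simpa [mul_apply, sq] using congrFun (congrFun hW j) j

theorem transpose_mul_diagonal_mul_apply_self (W : Matrix n n ℝ) (μ : n → ℝ) (j : n) :
    (Wᵀ * diagonal μ * W) j j = ∑ k, W k j ^ 2 * μ k := by
  rw [mul_apply]
  exact sum_congr rfl fun k _ => by rw [mul_diagonal, transpose_apply]; ring

theorem IsHermitian.eq_eigenvectorUnitary_mul_diagonal_mul_transpose {A : Matrix n n ℝ}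
    (hA : A.IsHermitian) :
    A = (hA.eigenvectorUnitary : Matrix n n ℝ) * diagonal hA.eigenvalues *
      (hA.eigenvectorUnitary : Matrix n n ℝ)ᵀ := by
  conv_lhs => rw [hA.spectral_theorem]
  simp [Unitary.conjStarAlgAut_apply, star_eq_conjTranspose]

theorem sum_le_sum_add_tangent_of_isHermitian {S : Set ℝ} {g g' : ℝ → ℝ}
    (htan : ∀ s ∈ S, ∀ t ∈ S, g t ≤ g s + g' s * (t - s))
    {A : Matrix n n ℝ} (hA : A.IsHermitian) (hμ : ∀ k, hA.eigenvalues k ∈ S)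
    {V : Matrix n n ℝ} (hV : Vᵀ * V = 1) {lam : n → ℝ} (hlam : ∀ j, lam j ∈ S) :
    ∑ k, g (hA.eigenvalues k) ≤ ∑ j, (g (lam j) + g' (lam j) * ((Vᵀ * A * V) j j - lam j)) := by
  set U : Matrix n n ℝ := ↑hA.eigenvectorUnitary
  have hU : U * Uᵀ = 1 := by
    simpa [star_eq_conjTranspose] using Unitary.mul_star_self_of_mem hA.eigenvectorUnitary.2
  have hW : (Uᵀ * V)ᵀ * (Uᵀ * V) = 1 := by
    rw [transpose_mul, transpose_transpose, Matrix.mul_assoc, ← Matrix.mul_assoc U, hU,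
      Matrix.one_mul, hV]
  have hconj : Vᵀ * A * V = (Uᵀ * V)ᵀ * diagonal hA.eigenvalues * (Uᵀ * V) := by
    conv_lhs => rw [hA.eq_eigenvectorUnitary_mul_diagonal_mul_transpose]
    simp only [U, transpose_mul, transpose_transpose, Matrix.mul_assoc]
  have hdiag : ∀ j,
      (Vᵀ * A * V) j j = ∑ k, of (fun i j => (Uᵀ * V) i j ^ 2) k j * hA.eigenvalues k :=
    fun j => by rw [hconj, transpose_mul_diagonal_mul_apply_self]; rfl
  simpa only [hdiag] using
    sum_le_sum_add_tangent_of_mem_doublyStochastic htan (sq_entries_mem_doublyStochastic hW) hμ hlam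

end Matrix

namespace FCLS

open Polynomial

theorem sum_comp_eigs {n : Type*} [Fintype n] [DecidableEq n] {A : Matrix n n ℝ}
    (hA : A.IsHermitian) (f : ℝ → ℝ) : ∑ j, f (eigs A j) = ∑ k, f (hA.eigenvalues k) := by
  rw [eigs, dif_pos hA]
  exact (Equiv.sum_comp (Tuple.sort _) fun j => f _).trans
    (Equiv.sum_comp (Fintype.equivFin n).symm fun k => f (hA.eigenvalues k))

namespace IsEigenDecomp

variable {d : ℕ} {A V : Matrix (Fin d) (Fin d) ℝ} {lam : Fin d → ℝ}

theorem mul_eq (h : IsEigenDecomp A V lam) : A * V = V * diagonal lam := by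
  ext i k
  rw [mul_diagonal, mul_apply, mul_comm (V i k)]
  simpa [mulVec, dotProduct] using congrFun (h.2 k) i

theorem transpose_mul_mul (h : IsEigenDecomp A V lam) : Vᵀ * A * V = diagonal lam := by
  rw [Matrix.mul_assoc, h.mul_eq, ← Matrix.mul_assoc, h.1, Matrix.one_mul]

theorem charpoly_eq (h : IsEigenDecomp A V lam) : A.charpoly = ∏ k, (X - C (lam k)) := by
  have hV : V * Vᵀ = 1 := mul_eq_one_comm.mp h.1
  rw [← charpoly_diagonal, ← h.transpose_mul_mul, Matrix.mul_assoc, charpoly_mul_comm,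
    Matrix.mul_assoc, hV, Matrix.mul_one]

theorem sum_comp_eq (h : IsEigenDecomp A V lam) (hA : A.IsHermitian) (f : ℝ → ℝ) :
    ∑ k, f (lam k) = ∑ k, f (hA.eigenvalues k) := by
  have hroots : univ.val.map lam = univ.val.map hA.eigenvalues := by
    have := hA.roots_charpoly_eq_eigenvalues
    rw [h.charpoly_eq, roots_prod _ _ (prod_ne_zero_iff.2 fun k _ => X_sub_C_ne_zero (lam k))]
      at this
    simpa using this
  simpa [sum_eq_multiset_sum, Multiset.map_map, Function.comp_def] using
    congrArg (fun s => (s.map f).sum) hroots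

theorem nonneg_of_posSemidef (h : IsEigenDecomp A V lam) (hA : A.PosSemidef) (k : Fin d) :
    0 ≤ lam k := by
  rw [← diagonal_apply_eq lam k, ← h.transpose_mul_mul, mul_mul_apply]
  simpa using hA.dotProduct_mulVec_nonneg (Vᵀ k)

end IsEigenDecomp

theorem lapM_mulVec_apply {n : Type*} [Fintype n] [DecidableEq n] (A : Matrix n n ℝ)
    (u : n → ℝ) (i : n) : (lapM A *ᵥ u) i = ∑ j, A i j * (u i - u j) := by
  rw [lapM, sub_mulVec, Pi.sub_apply, mulVec_diagonal]
  simp [mulVec, dotProduct, mul_sub, sum_mul]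

theorem dotProduct_lapM_mulVec {n : Type*} [Fintype n] [DecidableEq n] {A : Matrix n n ℝ}
    (hA : A.IsSymm) (u : n → ℝ) :
    u ⬝ᵥ (lapM A *ᵥ u) = (∑ i, ∑ j, A i j * (u i - u j) ^ 2) / 2 := by
  have hswap : ∑ i, ∑ j, A i j * (u i * (u i - u j)) = ∑ i, ∑ j, A i j * (u j * (u j - u i)) := by
    rw [sum_comm]
    simp_rw [hA.apply]
  have hexpand : u ⬝ᵥ (lapM A *ᵥ u) = ∑ i, ∑ j, A i j * (u i * (u i - u j)) := by
    simp only [dotProduct, lapM_mulVec_apply, mul_sum]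
    exact sum_congr rfl fun i _ => sum_congr rfl fun j _ => by ring
  rw [hexpand, eq_div_iff two_ne_zero, mul_two]
  nth_rewrite 2 [hswap]
  simp only [← sum_add_distrib]
  exact sum_congr rfl fun i _ => sum_congr rfl fun j _ => by ring

theorem isSymm_adjM {d : ℕ} (x : EdgeIdx d → ℝ) : (adjM x).IsSymm := by
  refine IsSymm.ext fun i j => ?_
  rcases lt_trichotomy i j with h | rfl | h
  · simp [adjM, h, h.not_gt]
  · rfl
  · simp [adjM, h, h.not_gt]

theorem isHermitian_lap {d : ℕ} (x : EdgeIdx d → ℝ) : (lap x).IsHermitian :=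
  isHermitian_iff_isSymm.2 <| (isSymm_diagonal _).sub (isSymm_adjM x)

theorem dotProduct_lap_mulVec {d : ℕ} (x : EdgeIdx d → ℝ) (u : Fin d → ℝ) :
    u ⬝ᵥ (lap x *ᵥ u) = ∑ e : EdgeIdx d, x e * (u e.1.1 - u e.1.2) ^ 2 := by
  rw [lap, dotProduct_lapM_mulVec (isSymm_adjM x),
    sum_sum_eq_sum_lt_add_swap _ fun i => by simp [adjM], div_eq_iff two_ne_zero, sum_mul]
  refine sum_congr rfl fun e _ => ?_
  simp only [adjM, of_apply, dif_pos e.2, dif_neg e.2.not_gt]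
  ring

theorem posSemidef_lap {d : ℕ} {x : EdgeIdx d → ℝ} (hx : ∀ e, 0 ≤ x e) : (lap x).PosSemidef :=
  .of_dotProduct_mulVec_nonneg (isHermitian_lap x) fun u => by
    rw [star_trivial, dotProduct_lap_mulVec]
    exact sum_nonneg fun e _ => mul_nonneg (hx e) (sq_nonneg _)

theorem sum_lapCoeff_mul {d K : ℕ} (V : Matrix (Fin d) (Fin K) ℝ) (w : Fin K → ℝ)
    (x : EdgeIdx d → ℝ) : ∑ e, lapCoeff V w e * x e = ∑ k, w k * (Vᵀ k ⬝ᵥ (lap x *ᵥ Vᵀ k)) := by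
  simp_rw [dotProduct_lap_mulVec, lapCoeff, mul_sum, sum_mul]
  rw [sum_comm]
  exact sum_congr rfl fun k _ => sum_congr rfl fun e _ => by simp only [transpose_apply]; ring

theorem stmt_0_general {d : ℕ}
    (g g' : ℝ → ℝ)
    (hconc : ConcaveOn ℝ (Set.Ici 0) g)
    (hderiv : ∀ t ∈ Set.Ici (0 : ℝ), HasDerivWithinAt g (g' t) (Set.Ici 0) t)
    (b β : EdgeIdx d → ℝ)
    (V : Matrix (Fin d) (Fin d) ℝ) (lam : Fin d → ℝ)
    (hVlam : IsEigenDecomp (lap fun e => |b e|) V lam) :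
    (∑ j, g (eigs (lap fun e => |β e|) j))
      ≤ (∑ j, g (eigs (lap fun e => |b e|) j))
        + ∑ e, lapCoeff V (fun k => g' (lam k)) e * (|β e| - |b e|) ∧
    (∑ j, g (eigs (lap fun e => |b e|) j)) = ∑ k, g (lam k) := by
  have hb := posSemidef_lap fun e => abs_nonneg (b e)
  have hβ := posSemidef_lap fun e => abs_nonneg (β e)
  have hsum_b : ∑ j, g (eigs (lap fun e => |b e|) j) = ∑ k, g (lam k) := by
    rw [sum_comp_eigs hb.1, hVlam.sum_comp_eq hb.1]
  refine ⟨?_, hsum_b⟩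
  have htan : ∀ s ∈ Set.Ici (0 : ℝ), ∀ t ∈ Set.Ici (0 : ℝ), g t ≤ g s + g' s * (t - s) :=
    fun s hs t ht => hconc.le_add_mul_sub_of_hasDerivWithinAt hs ht (hderiv s hs)
  have hcoeff : ∑ e, lapCoeff V (fun k => g' (lam k)) e * (|β e| - |b e|) =
      ∑ j, g' (lam j) * ((Vᵀ * (lap fun e => |β e|) * V) j j - lam j) := by
    simp_rw [mul_sub, sum_sub_distrib, sum_lapCoeff_mul, ← mul_mul_apply, hVlam.transpose_mul_mul,
      diagonal_apply_eq]
  rw [hsum_b, sum_comp_eigs hβ.1, hcoeff, ← sum_add_distrib]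
  exact sum_le_sum_add_tangent_of_isHermitian htan hβ.1 hβ.eigenvalues_nonneg hVlam.1
    (hVlam.nonneg_of_posSemidef hb)

/-- majorization of the folded concave Laplacian spectral penalty
by a weighted `ℓ1` surrogate, with equality at the base point. -/
theorem stmt_0 {d : ℕ} (hd : 2 ≤ d)
    (g g' : ℝ → ℝ)
    (hconc : ConcaveOn ℝ (Set.Ici 0) g)
    (hmono : MonotoneOn g (Set.Ici 0))
    (hderiv : ∀ t ∈ Set.Ici (0 : ℝ), HasDerivWithinAt g (g' t) (Set.Ici 0) t)
    (b β : EdgeIdx d → ℝ)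
    (V : Matrix (Fin d) (Fin d) ℝ) (lam : Fin d → ℝ)
    (hVlam : IsEigenDecomp (lap fun e => |b e|) V lam) :
    (∑ j, g (eigs (lap fun e => |β e|) j))
      ≤ (∑ j, g (eigs (lap fun e => |b e|) j))
        + ∑ e, lapCoeff V (fun k => g' (lam k)) e * (|β e| - |b e|) ∧
    (∑ j, g (eigs (lap fun e => |b e|) j)) = ∑ k, g (lam k) :=
  stmt_0_general g g' hconc hderiv b β V lam hVlam

end FCLS
end

section
/- Let d ≥ 2, D = C(d,2), and let L ∈ ℝ^{d×d} be symmetric with eigenvalues λ_1, …, λ_d (with multiplicity). Suppose V, Ṽ ∈ ℝ^{d×d} are two orthogonal matrices such that for each k the k-th columns of V and of Ṽ are eigenvectors of L with eigenvalue λ_k. Then for any function f: ℝ → ℝ, ℳ(V, f(λ)) = ℳ(Ṽ, f(λ)), where f(λ) ∈ ℝ^d is f applied entrywise to the eigenvalues; that is, the Laplacian coefficient does not depend on the choice of orthonormal eigenbasis. Moreover, for any orthogonal matrix V ∈ ℝ^{d×d} and any constant c ≥ 0, ℳ(V, c·𝟙_d) = 2c·𝟙_D, so that majorizing at b = 0 leaves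 the surrogate ½ ℳ(V, g'(0)·𝟙_d)ᵀ|β| = g'(0)·‖β‖_1. -/
open scoped BigOperators
open Matrix

/- Writing `L = V Λ Vᵀ = W Λ Wᵀ` with `Λ = diagonal λ`, the orthogonal matrix `U = Vᵀ W` commutes
with `Λ`, so `U k l ≠ 0` forces `λ k = λ l`; hence `U` also commutes with `diagonal (f ∘ λ)` and
`W f(Λ) Wᵀ = V U f(Λ) Uᵀ Vᵀ = V f(Λ) Vᵀ`. The coefficient `ℳ(V, w)` only depends on the entries of
`V diag(w) Vᵀ`, which is `c • 1` when `w` is constant `c` and `V` has orthonormal rows. -/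

namespace Matrix

theorem commute_diagonal_comp {n R : Type*} [Fintype n] [DecidableEq n] [CommRing R]
    [NoZeroDivisors R] {lam : n → R} {U : Matrix n n R} (h : Commute (diagonal lam) U)
    (f : R → R) : Commute (diagonal fun k => f (lam k)) U := by
  ext k l
  have hkl : lam k * U k l = U k l * lam l := by
    simpa only [diagonal_mul, mul_diagonal] using congr_fun (congr_fun h.eq k) l
  simp only [diagonal_mul, mul_diagonal]
  rcases eq_or_ne (U k l) 0 with hU | hU
  · simp [hU]
  · have : lam k = lam l := mul_right_cancel₀ hU (by rw [hkl, mul_comm])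
    rw [this, mul_comm]

theorem mul_eq_mul_diagonal_of_mulVec_eq {m n R : Type*} [Fintype m] [Fintype n]
    [DecidableEq n] [CommSemiring R] {L : Matrix m m R} {V : Matrix m n R} {lam : n → R}
    (h : ∀ k, L *ᵥ (fun i => V i k) = lam k • fun i => V i k) :
    L * V = V * diagonal lam := by
  ext i k
  rw [mul_diagonal]
  simpa [mulVec, dotProduct, mul_apply, mul_comm] using congr_fun (h k) i

theorem mul_diagonal_comp_mul_transpose_eq {n R : Type*} [Fintype n] [DecidableEq n]
    [CommRing R] [NoZeroDivisors R] {L V W : Matrix n n R} {lam : n → R}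
    (hVo : Vᵀ * V = 1) (hWo : Wᵀ * W = 1) (hV : L * V = V * diagonal lam)
    (hW : L * W = W * diagonal lam) (f : R → R) :
    V * diagonal (fun k => f (lam k)) * Vᵀ = W * diagonal (fun k => f (lam k)) * Wᵀ := by
  have hVVt : V * Vᵀ = 1 := mul_eq_one_comm.mp hVo
  have hWWt : W * Wᵀ = 1 := mul_eq_one_comm.mp hWo
  have hVtL : Vᵀ * L = diagonal lam * Vᵀ := by
    calc Vᵀ * L = Vᵀ * (L * V) * Vᵀ := by
          rw [Matrix.mul_assoc, Matrix.mul_assoc, hVVt, Matrix.mul_one]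
      _ = diagonal lam * Vᵀ := by rw [hV, ← Matrix.mul_assoc, hVo, Matrix.one_mul]
  set U := Vᵀ * W with hUdef
  have hU : Commute (diagonal lam) U := by
    calc diagonal lam * U = Vᵀ * (L * W) := by simp only [U, ← Matrix.mul_assoc, hVtL]
      _ = U * diagonal lam := by rw [hW, ← Matrix.mul_assoc]
  have hUUt : U * Uᵀ = 1 := by
    simp only [U, transpose_mul, transpose_transpose, Matrix.mul_assoc,
      ← Matrix.mul_assoc W, hWWt, Matrix.one_mul, hVo]
  have hVU : V * U = W := by rw [hUdef, ← Matrix.mul_assoc, hVVt, Matrix.one_mul]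
  rw [← hVU, transpose_mul]
  calc V * diagonal (fun k => f (lam k)) * Vᵀ
      = V * (diagonal (fun k => f (lam k)) * (U * Uᵀ)) * Vᵀ := by rw [hUUt, Matrix.mul_one]
    _ = V * U * diagonal (fun k => f (lam k)) * (Uᵀ * Vᵀ) := by
      simp only [← Matrix.mul_assoc, (commute_diagonal_comp hU f).eq]

end Matrix

namespace FCLS

open Matrix

variable {d K : ℕ}

theorem lapCoeff_apply_eq (V : Matrix (Fin d) (Fin K) ℝ) (w : Fin K → ℝ) (e : EdgeIdx d) :
    lapCoeff V w e = (V * diagonal w * Vᵀ) e.1.1 e.1.1 + (V * diagonal w * Vᵀ) e.1.2 e.1.2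
      - 2 * (V * diagonal w * Vᵀ) e.1.1 e.1.2 := by
  simp only [lapCoeff, mul_apply (N := Vᵀ), mul_diagonal, transpose_apply, Finset.mul_sum,
    ← Finset.sum_add_distrib, ← Finset.sum_sub_distrib]
  exact Finset.sum_congr rfl fun k _ => by ring

theorem lapCoeff_eq_of_mul_diagonal_mul_transpose_eq {V W : Matrix (Fin d) (Fin K) ℝ}
    {w : Fin K → ℝ} (h : V * diagonal w * Vᵀ = W * diagonal w * Wᵀ) :
    lapCoeff V w = lapCoeff W w := by
  funext e
  rw [lapCoeff_apply_eq, lapCoeff_apply_eq, h]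

theorem lapCoeff_const {V : Matrix (Fin d) (Fin K) ℝ} (hV : V * Vᵀ = 1) (c : ℝ) :
    lapCoeff V (fun _ => c) = fun _ => 2 * c := by
  have hM : V * diagonal (fun _ : Fin K => c) * Vᵀ = c • (1 : Matrix (Fin d) (Fin d) ℝ) := by
    rw [← smul_one_eq_diagonal, Matrix.mul_smul, Matrix.mul_one, Matrix.smul_mul, hV]
  funext e
  rw [lapCoeff_apply_eq, hM]
  simp only [Matrix.smul_apply, one_apply_eq, one_apply_ne e.2.ne, smul_eq_mul, mul_one, mul_zero,
    sub_zero]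
  ring

theorem stmt_1_general {d : ℕ} :
    (∀ L : Matrix (Fin d) (Fin d) ℝ, L.IsSymm →
      ∀ (lam : Fin d → ℝ) (V W : Matrix (Fin d) (Fin d) ℝ),
        Vᵀ * V = 1 → Wᵀ * W = 1 →
        (∀ k, L *ᵥ (fun i => V i k) = lam k • fun i => V i k) →
        (∀ k, L *ᵥ (fun i => W i k) = lam k • fun i => W i k) →
        ∀ f : ℝ → ℝ, lapCoeff V (fun k => f (lam k)) = lapCoeff W (fun k => f (lam k))) ∧
    (∀ V : Matrix (Fin d) (Fin d) ℝ, Vᵀ * V = 1 → ∀ c : ℝ, 0 ≤ c →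
      (lapCoeff V (fun _ => c) = fun _ => 2 * c) ∧
      ∀ β : EdgeIdx d → ℝ,
        (1 / 2) * ∑ e, lapCoeff V (fun _ => c) e * |β e| = c * ∑ e, |β e|) := by
  refine ⟨fun L _ lam V W hVo hWo hV hW f => ?_, fun V hVo c _ => ?_⟩
  · exact lapCoeff_eq_of_mul_diagonal_mul_transpose_eq <|
      mul_diagonal_comp_mul_transpose_eq hVo hWo (mul_eq_mul_diagonal_of_mulVec_eq hV)
        (mul_eq_mul_diagonal_of_mulVec_eq hW) f
  · have hconst := lapCoeff_const (mul_eq_one_comm.mp hVo) c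
    refine ⟨hconst, fun β => ?_⟩
    simp only [hconst, Finset.mul_sum]
    exact Finset.sum_congr rfl fun e _ => by ring

/-- the Laplacian coefficient `ℳ(V, f(λ))` does not depend on the
choice of orthonormal eigenbasis; for constant weights it reduces to a Lasso. -/
theorem stmt_1 {d : ℕ} (hd : 2 ≤ d) :
    (∀ L : Matrix (Fin d) (Fin d) ℝ, L.IsSymm →
      ∀ (lam : Fin d → ℝ) (V W : Matrix (Fin d) (Fin d) ℝ),
        Vᵀ * V = 1 → Wᵀ * W = 1 →
        (∀ k, L *ᵥ (fun i => V i k) = lam k • fun i => V i k) →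
        (∀ k, L *ᵥ (fun i => W i k) = lam k • fun i => W i k) →
        ∀ f : ℝ → ℝ, lapCoeff V (fun k => f (lam k)) = lapCoeff W (fun k => f (lam k))) ∧
    (∀ V : Matrix (Fin d) (Fin d) ℝ, Vᵀ * V = 1 → ∀ c : ℝ, 0 ≤ c →
      (lapCoeff V (fun _ => c) = fun _ => 2 * c) ∧
      ∀ β : EdgeIdx d → ℝ,
        (1 / 2) * ∑ e, lapCoeff V (fun _ => c) e * |β e| = c * ∑ e, |β e|) :=
  stmt_1_general

end FCLS
end

section
/- Let w ∈ ℝ_{≥0}^K and V_A, V_B ∈ ℝ^{d×K}. Then: (a) for every pair (ij), |√(ℳ(V_A, w)_{(ij)}) − √(ℳ(V_B, w)_{(ij)})| ≤ 2√(max(w))·‖V_A − V_B‖_{2→∞}; (b) if 𝒢 is a (binary, undirected) graph on d vertices whose largest connected component has d*_max vertices, then Σ_{(ij)∈𝒢} |√(ℳ(V_A, w)_{(ij)}) − √(ℳ(V_B, w)_{(ij)})|² ≤ 2·max(w)·d*_max·‖V_A − V_B‖_F², where each edge is counted once; and (c) Σ_{(ij)∈𝒢} |√(ℳ(V_A, w)_{(ij)})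 − √(ℳ(V_B, w)_{(ij)})|⁴ ≤ 8·max(w)²·d*_max·‖V_A − V_B‖_F⁴. -/
open scoped BigOperators
open Matrix

namespace FCLS

/-! For `w ≥ 0` and a fixed edge `(ij)`, `√ℳ(V, w)_(ij)` is the Euclidean norm of the vector
`(√w_k (V_ik - V_jk))_k`, so `V ↦ √ℳ(V, w)_(ij)` is a seminorm. The reverse triangle inequality
bounds the difference by `√ℳ(D, w)_(ij) ≤ √max(w) (‖D_i‖ + ‖D_j‖)` with `D = V_A - V_B`, which is (a).
Squaring, an edge contributes at most `2 max(w) (‖D_i‖² + ‖D_j‖²)`; summed over the edges, `‖D_i‖²`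
is weighted by the degree of `i`, which is less than the size of its connected component. Part (c)
is the same count applied to `‖D_i‖⁴`, with `∑ ‖D_i‖⁴ ≤ (∑ ‖D_i‖²)² = ‖D‖_F⁴`. -/

section EuclideanSums

variable {ι : Type*} [Fintype ι]

lemma sqrt_sum_sq_eq_norm_toLp (a : ι → ℝ) :
    √(∑ i, a i ^ 2) = ‖WithLp.toLp 2 a‖ := by
  simp [EuclideanSpace.norm_eq, Real.norm_eq_abs, sq_abs]

lemma abs_sqrt_sum_sq_sub_le (a b : ι → ℝ) :
    |√(∑ i, a i ^ 2) - √(∑ i, b i ^ 2)| ≤ √(∑ i, (a i - b i) ^ 2) := by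
  simpa only [← WithLp.toLp_sub, ← sqrt_sum_sq_eq_norm_toLp, Pi.sub_apply] using
    abs_norm_sub_norm_le (WithLp.toLp 2 a) (WithLp.toLp 2 b)

lemma sqrt_sum_sub_sq_le (a b : ι → ℝ) :
    √(∑ i, (a i - b i) ^ 2) ≤ √(∑ i, a i ^ 2) + √(∑ i, b i ^ 2) := by
  simpa only [← WithLp.toLp_sub, ← sqrt_sum_sq_eq_norm_toLp, Pi.sub_apply] using
    norm_sub_le (WithLp.toLp 2 a) (WithLp.toLp 2 b)

lemma sqrt_sum_mul_sq_le {w : ι → ℝ} {W : ℝ} (hwW : ∀ i, w i ≤ W) (a : ι → ℝ) :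
    √(∑ i, w i * a i ^ 2) ≤ √W * √(∑ i, a i ^ 2) := by
  rw [← Real.sqrt_mul' _ (Finset.sum_nonneg fun i _ => sq_nonneg (a i)), Finset.mul_sum]
  exact Real.sqrt_le_sqrt <| Finset.sum_le_sum fun i _ =>
    mul_le_mul_of_nonneg_right (hwW i) (sq_nonneg _)

end EuclideanSums

section LapCoeff

variable {d K : ℕ} {w : Fin K → ℝ}

lemma lapCoeff_eq_sum_sq (hw : ∀ k, 0 ≤ w k) (V : Matrix (Fin d) (Fin K) ℝ) (e : EdgeIdx d) :
    lapCoeff V w e = ∑ k, (√(w k) * (V e.1.1 k - V e.1.2 k)) ^ 2 := by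
  simp only [lapCoeff, mul_pow, Real.sq_sqrt (hw _)]

lemma abs_sqrt_lapCoeff_sub_le (hw : ∀ k, 0 ≤ w k) (VA VB : Matrix (Fin d) (Fin K) ℝ)
    (e : EdgeIdx d) :
    |√(lapCoeff VA w e) - √(lapCoeff VB w e)| ≤ √(lapCoeff (VA - VB) w e) := by
  rw [lapCoeff_eq_sum_sq hw, lapCoeff_eq_sum_sq hw, lapCoeff_eq_sum_sq hw]
  convert abs_sqrt_sum_sq_sub_le _ _ using 4 with k
  simp only [Matrix.sub_apply]
  ring

lemma sqrt_lapCoeff_le {W : ℝ} (hwW : ∀ k, w k ≤ W) (V : Matrix (Fin d) (Fin K) ℝ)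
    (e : EdgeIdx d) :
    √(lapCoeff V w e) ≤ √W * (√(∑ k, V e.1.1 k ^ 2) + √(∑ k, V e.1.2 k ^ 2)) :=
  (sqrt_sum_mul_sq_le hwW _).trans <|
    mul_le_mul_of_nonneg_left (sqrt_sum_sub_sq_le _ _) (Real.sqrt_nonneg W)

end LapCoeff

lemma sqrt_sum_sq_row_le_twoInf {m n : Type*} [Fintype m] [Fintype n] (A : Matrix m n ℝ)
    (i : m) : √(∑ j, A i j ^ 2) ≤ twoInf A :=
  le_ciSup (f := fun i => √(∑ j, A i j ^ 2)) (Finite.bddAbove_range _) i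

lemma frob_sq {m n : Type*} [Fintype m] [Fintype n] (A : Matrix m n ℝ) :
    frob A ^ 2 = ∑ i, ∑ j, A i j ^ 2 :=
  Real.sq_sqrt (Finset.sum_nonneg fun i _ => Finset.sum_nonneg fun j _ => sq_nonneg (A i j))

section EdgeSums

variable {d : ℕ} (G : SimpleGraph (Fin d)) [DecidableRel G.Adj]

lemma degree_le_maxCompCard (i : Fin d) : G.degree i ≤ maxCompCard G := by
  calc G.degree i = Nat.card (G.neighborSet i) := by
        rw [← SimpleGraph.card_neighborSet_eq_degree, Nat.card_eq_fintype_card]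
    _ ≤ compCard G i :=
        Nat.card_le_card_of_injective
          (fun j => ⟨j.1, (G.mem_neighborSet i j).1 j.2 |>.reachable⟩) fun _ _ h => Subtype.ext (Subtype.mk.inj h)
    _ ≤ maxCompCard G := Finset.le_sup (Finset.mem_univ i)

lemma sum_edgeIdx_adj_add_eq (f : Fin d → ℝ) :
    ∑ e : EdgeIdx d, (if G.Adj e.1.1 e.1.2 then f e.1.1 + f e.1.2 else 0)
      = ∑ i, (G.degree i : ℝ) * f i := by
  have hlt : ∑ e : EdgeIdx d, (if G.Adj e.1.1 e.1.2 then f e.1.1 + f e.1.2 else 0)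
      = ∑ p : Fin d × Fin d, (if p.1 < p.2 ∧ G.Adj p.1 p.2 then f p.1 + f p.2 else 0) := by
    simp only [ite_and]
    symm
    rw [← Finset.sum_filter, ← Finset.sum_subtype_eq_sum_filter, Finset.subtype_univ]
  have hswap : ∑ p : Fin d × Fin d, (if p.1 < p.2 ∧ G.Adj p.1 p.2 then f p.2 else 0)
      = ∑ p : Fin d × Fin d, (if p.2 < p.1 ∧ G.Adj p.1 p.2 then f p.1 else 0) :=
    Fintype.sum_equiv (Equiv.prodComm _ _) _ _ fun p => by simp [G.adj_comm]
  have htri : ∀ p : Fin d × Fin d,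
      (if p.1 < p.2 ∧ G.Adj p.1 p.2 then f p.1 else 0)
        + (if p.2 < p.1 ∧ G.Adj p.1 p.2 then f p.1 else 0)
        = if G.Adj p.1 p.2 then f p.1 else 0 := by
    rintro ⟨i, j⟩
    rcases lt_trichotomy i j with hij | rfl | hij
    · simp [hij, hij.not_gt]
    · simp
    · simp [hij, hij.not_gt]
  have hdeg : ∀ i, ∑ j, (if G.Adj i j then f i else 0) = (G.degree i : ℝ) * f i := fun i => by
    rw [← Finset.sum_filter, Finset.sum_const, nsmul_eq_mul, ← G.card_neighborFinset_eq_degree,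
      G.neighborFinset_eq_filter]
  rw [hlt]
  simp only [ite_add_zero]
  rw [Finset.sum_add_distrib, hswap, ← Finset.sum_add_distrib]
  simp only [htri, Fintype.sum_prod_type, hdeg]

lemma sum_edgeIdx_adj_le {h : EdgeIdx d → ℝ} {f : Fin d → ℝ} (hf : ∀ i, 0 ≤ f i)
    (hle : ∀ e : EdgeIdx d, G.Adj e.1.1 e.1.2 → h e ≤ f e.1.1 + f e.1.2) :
    ∑ e : EdgeIdx d, (if G.Adj e.1.1 e.1.2 then h e else 0)
      ≤ maxCompCard G * ∑ i, f i :=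
  calc ∑ e : EdgeIdx d, (if G.Adj e.1.1 e.1.2 then h e else 0)
      ≤ ∑ e : EdgeIdx d, (if G.Adj e.1.1 e.1.2 then f e.1.1 + f e.1.2 else 0) :=
        Finset.sum_le_sum fun e _ => by split_ifs with he <;> simp [hle e, he]
    _ = ∑ i, (G.degree i : ℝ) * f i := sum_edgeIdx_adj_add_eq G f
    _ ≤ maxCompCard G * ∑ i, f i := by
        rw [Finset.mul_sum]
        exact Finset.sum_le_sum fun i _ =>
          mul_le_mul_of_nonneg_right (mod_cast degree_le_maxCompCard G i) (hf i)

end EdgeSums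

lemma sq_le_two_mul_add_of_le_sqrt_mul {x W a b : ℝ} (hx : 0 ≤ x) (hW : 0 ≤ W) (ha : 0 ≤ a)
    (hb : 0 ≤ b) (h : x ≤ √W * (√a + √b)) : x ^ 2 ≤ 2 * W * (a + b) :=
  calc x ^ 2 ≤ (√W * (√a + √b)) ^ 2 := pow_le_pow_left₀ hx h 2
    _ = W * (2 * (a + b) - (√a - √b) ^ 2) := by
        rw [mul_pow, Real.sq_sqrt hW]
        ring_nf
        rw [Real.sq_sqrt ha, Real.sq_sqrt hb]
        ring
    _ ≤ 2 * W * (a + b) := by nlinarith [sq_nonneg (√a - √b)]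

lemma pow_four_le_of_sq_le_two_mul_add {x W a b : ℝ} (h : x ^ 2 ≤ 2 * W * (a + b)) :
    x ^ 4 ≤ 8 * W ^ 2 * (a ^ 2 + b ^ 2) :=
  calc x ^ 4 = (x ^ 2) ^ 2 := by ring
    _ ≤ (2 * W * (a + b)) ^ 2 := pow_le_pow_left₀ (sq_nonneg x) h 2
    _ ≤ 8 * W ^ 2 * (a ^ 2 + b ^ 2) := by nlinarith [sq_nonneg (W * (a - b))]

theorem stmt_7_general {d K : ℕ} (w : Fin K → ℝ) (hw : ∀ k, 0 ≤ w k)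
    (VA VB : Matrix (Fin d) (Fin K) ℝ)
    (G : SimpleGraph (Fin d)) [DecidableRel G.Adj] :
    (∀ e : EdgeIdx d,
      |Real.sqrt (lapCoeff VA w e) - Real.sqrt (lapCoeff VB w e)|
        ≤ 2 * Real.sqrt (⨆ k, w k) * twoInf (VA - VB)) ∧
    (∑ e : EdgeIdx d, (if G.Adj e.1.1 e.1.2 then
        |Real.sqrt (lapCoeff VA w e) - Real.sqrt (lapCoeff VB w e)| ^ 2 else 0))
      ≤ 2 * (⨆ k, w k) * (maxCompCard G : ℝ) * frob (VA - VB) ^ 2 ∧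
    (∑ e : EdgeIdx d, (if G.Adj e.1.1 e.1.2 then
        |Real.sqrt (lapCoeff VA w e) - Real.sqrt (lapCoeff VB w e)| ^ 4 else 0))
      ≤ 8 * (⨆ k, w k) ^ 2 * (maxCompCard G : ℝ) * frob (VA - VB) ^ 4 := by
  set W := ⨆ k, w k
  have hW : 0 ≤ W := Real.iSup_nonneg hw
  set D := VA - VB
  set g : Fin d → ℝ := fun i => ∑ k, D i k ^ 2
  have hg : ∀ i, 0 ≤ g i := fun i => Finset.sum_nonneg fun k _ => sq_nonneg (D i k)
  have hedge (e : EdgeIdx d) :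
      |√(lapCoeff VA w e) - √(lapCoeff VB w e)| ≤ √W * (√(g e.1.1) + √(g e.1.2)) :=
    (abs_sqrt_lapCoeff_sub_le hw VA VB e).trans
      (sqrt_lapCoeff_le (le_ciSup (Finite.bddAbove_range w)) D e)
  have hedge_sq (e : EdgeIdx d) :
      |√(lapCoeff VA w e) - √(lapCoeff VB w e)| ^ 2 ≤ 2 * W * (g e.1.1 + g e.1.2) :=
    sq_le_two_mul_add_of_le_sqrt_mul (abs_nonneg _) hW (hg _) (hg _) (hedge e)
  refine ⟨fun e => (hedge e).trans ?_, ?_, ?_⟩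
  · nlinarith [sqrt_sum_sq_row_le_twoInf D e.1.1, sqrt_sum_sq_row_le_twoInf D e.1.2,
      Real.sqrt_nonneg W]
  · calc _ ≤ (maxCompCard G : ℝ) * ∑ i, 2 * W * g i :=
          sum_edgeIdx_adj_le G (fun i => by positivity) fun e _ => by linarith [hedge_sq e]
      _ = _ := by rw [frob_sq, ← Finset.mul_sum]; ring
  · calc _ ≤ (maxCompCard G : ℝ) * ∑ i, 8 * W ^ 2 * g i ^ 2 :=
          sum_edgeIdx_adj_le G (f := fun i => 8 * W ^ 2 * g i ^ 2) (fun i => by positivity)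
            fun e _ => (pow_four_le_of_sq_le_two_mul_add (hedge_sq e)).trans_eq (by ring)
      _ ≤ 8 * W ^ 2 * maxCompCard G * (∑ i, g i) ^ 2 := by
          rw [← Finset.mul_sum]
          have hsum := Finset.sum_sq_le_sq_sum_of_nonneg (s := Finset.univ) fun i _ => hg i
          linarith [mul_le_mul_of_nonneg_left hsum
            (by positivity : (0 : ℝ) ≤ 8 * W ^ 2 * maxCompCard G)]
      _ = _ := by rw [show frob D ^ 4 = (frob D ^ 2) ^ 2 by ring, frob_sq]

/-- stability of the Laplacian coefficient in the eigenvector matrix. -/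
theorem stmt_7 {d K : ℕ} (hd : 2 ≤ d) (w : Fin K → ℝ) (hw : ∀ k, 0 ≤ w k)
    (VA VB : Matrix (Fin d) (Fin K) ℝ)
    (G : SimpleGraph (Fin d)) [DecidableRel G.Adj] :
    (∀ e : EdgeIdx d,
      |Real.sqrt (lapCoeff VA w e) - Real.sqrt (lapCoeff VB w e)|
        ≤ 2 * Real.sqrt (⨆ k, w k) * twoInf (VA - VB)) ∧
    (∑ e : EdgeIdx d, (if G.Adj e.1.1 e.1.2 then
        |Real.sqrt (lapCoeff VA w e) - Real.sqrt (lapCoeff VB w e)| ^ 2 else 0))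
      ≤ 2 * (⨆ k, w k) * (maxCompCard G : ℝ) * frob (VA - VB) ^ 2 ∧
    (∑ e : EdgeIdx d, (if G.Adj e.1.1 e.1.2 then
        |Real.sqrt (lapCoeff VA w e) - Real.sqrt (lapCoeff VB w e)| ^ 4 else 0))
      ≤ 8 * (⨆ k, w k) ^ 2 * (maxCompCard G : ℝ) * frob (VA - VB) ^ 4 :=
  stmt_7_general w hw VA VB G

end FCLS
end

section
/- Let ℓ: ℝ^D → ℝ be convex, S ⊆ [D] a set of indices with |S| = s*, and suppose that the restriction of ℓ to the subspace {β : β_{Sᶜ} = 0} is differentiable and μ-strongly convex (μ > 0). Let β̂^orc be the minimizer of ℓ subject to β_{Sᶜ} = 0. Fix a_0, τ, ρ > 0 and a positive integer d*_max. Then: (a) for any weight vector w ∈ ℝ_{≥0}^D with w_{Sᶜ} = 0, ‖w‖_max ≤ 2^5 a_0 τ ρ², ‖w‖_2 ≤ 2^{9/2}√(d*_max)·a_0 τ ρ², and ‖w‖_1 ≤ 2^4 d*_max a_0 τ ρ², any minimizer β of ℓ(β) + ½ Σ_{j∈S} w_j |β_j| subject to β_{Sᶜ} = 0 satisfies ‖β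 − β̂^orc‖_2 ≤ 2^{9/2} a_0 √(d*_max) τ ρ²/μ; and (b) for any w ∈ ℝ_{≥0}^D with w_{Sᶜ} = 0 and ‖w‖_max ≤ 2^5 a_0 τ ρ², any such minimizer satisfies ‖β − β̂^orc‖_2 ≤ 2^5 a_0 √(s*) τ ρ²/μ. -/
open scoped BigOperators
open Matrix

namespace FCLS

/-!
At the oracle `β̂` the restricted gradient vanishes, so strong convexity gives
`μ/2 ‖β - β̂‖² ≤ ℓ β - ℓ β̂`. Minimality of `β` for the penalized problem bounds this by
`½ ∑ w (|β̂| - |β|) ≤ ½ ‖w‖₂ ‖β - β̂‖₂`, hence `‖β - β̂‖₂ ≤ ‖w‖₂ / μ`. Part (a) then uses the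
assumed bound on `‖w‖₂`, part (b) the bound `‖w‖₂ ≤ √s* ‖w‖_max`.
-/

theorem add_half_mul_norm_sub_sq_le_of_isMinOn {E : Type*} [NormedAddCommGroup E]
    [InnerProductSpace ℝ E] [CompleteSpace E] {f : E → ℝ} {μ : ℝ}
    (hsc : ∀ u v, f u + inner ℝ (gradient f u) (v - u) + μ / 2 * ‖v - u‖ ^ 2 ≤ f v)
    {x₀ : E} (hmin : IsMinOn f Set.univ x₀) (v : E) :
    f x₀ + μ / 2 * ‖v - x₀‖ ^ 2 ≤ f v := by
  have hgrad : gradient f x₀ = 0 := by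
    simp [gradient, (hmin.isLocalMin Filter.univ_mem).fderiv_eq_zero]
  simpa [hgrad] using hsc x₀ v

section FiniteCoordinates

variable {α : Type*} [Fintype α]

theorem sum_mul_abs_sub_sum_mul_abs_le (S : Finset α) {w : α → ℝ} (hw : ∀ j, 0 ≤ w j)
    (x y : α → ℝ) :
    ∑ j ∈ S, w j * |y j| - ∑ j ∈ S, w j * |x j| ≤ l2 w * l2 (fun j => x j - y j) := by
  calc ∑ j ∈ S, w j * |y j| - ∑ j ∈ S, w j * |x j|
      = ∑ j ∈ S, w j * (|y j| - |x j|) := by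
        rw [← Finset.sum_sub_distrib]; simp only [mul_sub]
    _ ≤ ∑ j ∈ S, w j * |x j - y j| :=
        Finset.sum_le_sum fun j _ =>
          mul_le_mul_of_nonneg_left (abs_sub_comm (x j) (y j) ▸ abs_sub_abs_le_abs_sub _ _) (hw j)
    _ ≤ ∑ j, w j * |x j - y j| :=
        Finset.sum_le_sum_of_subset_of_nonneg S.subset_univ
          fun j _ _ => mul_nonneg (hw j) (abs_nonneg _)
    _ ≤ l2 w * l2 (fun j => x j - y j) := by
        simpa only [l2, sq_abs] using
          Real.sum_mul_le_sqrt_mul_sqrt Finset.univ w fun j => |x j - y j|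

theorem l2_le_sqrt_card_mul {S : Finset α} {w : α → ℝ} {B : ℝ} (hB : 0 ≤ B)
    (hsupp : ∀ j ∉ S, w j = 0) (hw : ∀ j ∈ S, |w j| ≤ B) :
    l2 w ≤ Real.sqrt S.card * B := by
  have hsum : ∑ j, w j ^ 2 ≤ S.card * B ^ 2 := by
    calc ∑ j, w j ^ 2 = ∑ j ∈ S, w j ^ 2 :=
          (Finset.sum_subset S.subset_univ fun j _ hj => by simp [hsupp j hj]).symm
      _ ≤ ∑ _j ∈ S, B ^ 2 :=
          Finset.sum_le_sum fun j hj => sq_abs (w j) ▸ pow_le_pow_left₀ (abs_nonneg _) (hw j hj) 2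
      _ = S.card * B ^ 2 := by rw [Finset.sum_const, nsmul_eq_mul]
  calc l2 w ≤ Real.sqrt (S.card * B ^ 2) := Real.sqrt_le_sqrt hsum
    _ = Real.sqrt S.card * B := by rw [Real.sqrt_mul (Nat.cast_nonneg _), Real.sqrt_sq hB]

theorem l2_sub_le_div_of_weighted_l1_min (f : (α → ℝ) → ℝ) (S : Finset α) {μ : ℝ} (hμ : 0 < μ)
    {w x₀ x : α → ℝ} (hw : ∀ j, 0 ≤ w j)
    (hgrowth : f x₀ + μ / 2 * l2 (fun j => x j - x₀ j) ^ 2 ≤ f x)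
    (hmin : f x + (1 / 2) * ∑ j ∈ S, w j * |x j| ≤ f x₀ + (1 / 2) * ∑ j ∈ S, w j * |x₀ j|) :
    l2 (fun j => x j - x₀ j) ≤ l2 w / μ := by
  set r := l2 fun j => x j - x₀ j
  have hr : 0 ≤ r := Real.sqrt_nonneg _
  have hW : 0 ≤ l2 w := Real.sqrt_nonneg _
  have hpen := sum_mul_abs_sub_sum_mul_abs_le S hw x x₀
  have hquad : μ * r ^ 2 ≤ l2 w * r := by linarith
  rw [le_div_iff₀ hμ]
  rcases hr.eq_or_lt with hr0 | hrpos
  · rw [← hr0, zero_mul]; exact hW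
  · nlinarith

theorem norm_toLp_restrict_eq_l2 {S : Finset α} {x : α → ℝ} (hx : ∀ j ∉ S, x j = 0) :
    ‖(WithLp.toLp 2 fun j : S => x j : EuclideanSpace ℝ S)‖ = l2 x := by
  rw [EuclideanSpace.norm_eq, l2]
  congr 1
  simp only [Real.norm_eq_abs, sq_abs]
  rw [Finset.sum_coe_sort S fun j => x j ^ 2]
  exact Finset.sum_subset S.subset_univ fun j _ hj => by simp [hx j hj]

theorem add_half_mul_l2_sub_sq_le_of_restrict [DecidableEq α] {ℓ : (α → ℝ) → ℝ}
    {S : Finset α} {μ : ℝ} {ι : EuclideanSpace ℝ S → (α → ℝ)}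
    (hι : ∀ v j, ι v j = if h : j ∈ S then v ⟨j, h⟩ else 0)
    (hsc : ∀ u v : EuclideanSpace ℝ S,
      ℓ (ι u) + inner ℝ (gradient (ℓ ∘ ι) u) (v - u) + μ / 2 * ‖v - u‖ ^ 2 ≤ ℓ (ι v))
    {x₀ : α → ℝ} (hx₀ : ∀ j ∉ S, x₀ j = 0) (hmin : ∀ x, (∀ j ∉ S, x j = 0) → ℓ x₀ ≤ ℓ x)
    {x : α → ℝ} (hx : ∀ j ∉ S, x j = 0) :
    ℓ x₀ + μ / 2 * l2 (fun j => x j - x₀ j) ^ 2 ≤ ℓ x := by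
  let restrict (y : α → ℝ) : EuclideanSpace ℝ S := WithLp.toLp 2 fun j : S => y j
  have hι_restrict : ∀ y : α → ℝ, (∀ j ∉ S, y j = 0) → ι (restrict y) = y := fun y hy => by
    funext j
    by_cases hj : j ∈ S <;> simp [hι, hj, hy, restrict]
  have hι_supp : ∀ v j, j ∉ S → ι v j = 0 := fun v j hj => by simp [hι, hj]
  have hminOn : IsMinOn (ℓ ∘ ι) Set.univ (restrict x₀) :=
    isMinOn_univ_iff.mpr fun v => by
      simpa only [Function.comp_apply, hι_restrict x₀ hx₀] using hmin _ (hι_supp v)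
  have hnorm : ‖restrict x - restrict x₀‖ = l2 fun j => x j - x₀ j := by
    rw [← norm_toLp_restrict_eq_l2 (S := S) fun j hj => by simp [hx j hj, hx₀ j hj]]
    rfl
  simpa only [Function.comp_apply, hι_restrict x hx, hι_restrict x₀ hx₀, hnorm] using
    add_half_mul_norm_sub_sq_le_of_isMinOn hsc hminOn (restrict x)

end FiniteCoordinates

theorem stmt_12_general {D : ℕ} (ℓ : (Fin D → ℝ) → ℝ)
    (S : Finset (Fin D)) (sstar : ℕ) (hs : S.card = sstar)
    (μ : ℝ) (hμ : 0 < μ)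
    (ι : EuclideanSpace ℝ S → (Fin D → ℝ))
    (hι : ∀ v (j : Fin D), ι v j = if h : j ∈ S then v ⟨j, h⟩ else 0)
    (hsc : ∀ u v : EuclideanSpace ℝ S,
      ℓ (ι u) + (inner ℝ (gradient (ℓ ∘ ι) u) (v - u) : ℝ) + (μ / 2) * ‖v - u‖ ^ 2 ≤ ℓ (ι v))
    (a0 τ ρ : ℝ) (ha0 : 0 < a0) (hτ : 0 < τ)
    (dmax : ℕ)
    (orc : Fin D → ℝ)
    (horc0 : ∀ j ∉ S, orc j = 0)
    (horcmin : ∀ β : Fin D → ℝ, (∀ j ∉ S, β j = 0) → ℓ orc ≤ ℓ β) :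
    (∀ w : Fin D → ℝ, (∀ j, 0 ≤ w j) → (∀ j ∉ S, w j = 0) →
      (∀ j, w j ≤ 2 ^ 5 * a0 * τ * ρ ^ 2) →
      l2 w ≤ (2 : ℝ) ^ ((9 : ℝ) / 2) * Real.sqrt dmax * a0 * τ * ρ ^ 2 →
      (∑ j, w j) ≤ 2 ^ 4 * (dmax : ℝ) * a0 * τ * ρ ^ 2 →
      ∀ β : Fin D → ℝ, (∀ j ∉ S, β j = 0) →
        (∀ γ : Fin D → ℝ, (∀ j ∉ S, γ j = 0) →
          ℓ β + (1 / 2) * ∑ j ∈ S, w j * |β j| ≤ ℓ γ + (1 / 2) * ∑ j ∈ S, w j * |γ j|) →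
        l2 (fun j => β j - orc j)
          ≤ (2 : ℝ) ^ ((9 : ℝ) / 2) * a0 * Real.sqrt dmax * τ * ρ ^ 2 / μ) ∧
    (∀ w : Fin D → ℝ, (∀ j, 0 ≤ w j) → (∀ j ∉ S, w j = 0) →
      (∀ j, w j ≤ 2 ^ 5 * a0 * τ * ρ ^ 2) →
      ∀ β : Fin D → ℝ, (∀ j ∉ S, β j = 0) →
        (∀ γ : Fin D → ℝ, (∀ j ∉ S, γ j = 0) →
          ℓ β + (1 / 2) * ∑ j ∈ S, w j * |β j| ≤ ℓ γ + (1 / 2) * ∑ j ∈ S, w j * |γ j|) →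
        l2 (fun j => β j - orc j) ≤ 2 ^ 5 * a0 * Real.sqrt sstar * τ * ρ ^ 2 / μ) := by
  have hclose : ∀ w β : Fin D → ℝ, (∀ j, 0 ≤ w j) → (∀ j ∉ S, β j = 0) →
      (∀ γ : Fin D → ℝ, (∀ j ∉ S, γ j = 0) →
        ℓ β + (1 / 2) * ∑ j ∈ S, w j * |β j| ≤ ℓ γ + (1 / 2) * ∑ j ∈ S, w j * |γ j|) →
      l2 (fun j => β j - orc j) ≤ l2 w / μ := fun w β hw hβ hβmin =>
    l2_sub_le_div_of_weighted_l1_min ℓ S hμ hw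
      (add_half_mul_l2_sub_sq_le_of_restrict hι hsc horc0 horcmin hβ) (hβmin orc horc0)
  refine ⟨fun w hw _ _ hwl2 _ β hβ hβmin => ?_, fun w hw hwS hwmax β hβ hβmin => ?_⟩
  · calc l2 (fun j => β j - orc j) ≤ l2 w / μ := hclose w β hw hβ hβmin
      _ ≤ (2 : ℝ) ^ ((9 : ℝ) / 2) * Real.sqrt dmax * a0 * τ * ρ ^ 2 / μ :=
        div_le_div_of_nonneg_right hwl2 hμ.le
      _ = (2 : ℝ) ^ ((9 : ℝ) / 2) * a0 * Real.sqrt dmax * τ * ρ ^ 2 / μ := by ring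
  · have hB : 0 ≤ 2 ^ 5 * a0 * τ * ρ ^ 2 := by positivity
    have hwB : ∀ j ∈ S, |w j| ≤ 2 ^ 5 * a0 * τ * ρ ^ 2 := fun j _ =>
      (abs_of_nonneg (hw j)).trans_le (hwmax j)
    calc l2 (fun j => β j - orc j) ≤ l2 w / μ := hclose w β hw hβ hβmin
      _ ≤ Real.sqrt S.card * (2 ^ 5 * a0 * τ * ρ ^ 2) / μ :=
        div_le_div_of_nonneg_right (l2_le_sqrt_card_mul hB hwS hwB) hμ.le
      _ = 2 ^ 5 * a0 * Real.sqrt sstar * τ * ρ ^ 2 / μ := by rw [hs]; ring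

/-- weighted-Lasso block-oracle solutions with small weights stay
close to the block oracle when the restricted loss is strongly convex. -/
theorem stmt_12 {D : ℕ} (ℓ : (Fin D → ℝ) → ℝ) (hconv : ConvexOn ℝ Set.univ ℓ)
    (S : Finset (Fin D)) (sstar : ℕ) (hs : S.card = sstar)
    (μ : ℝ) (hμ : 0 < μ)
    (ι : EuclideanSpace ℝ S → (Fin D → ℝ))
    (hι : ∀ v (j : Fin D), ι v j = if h : j ∈ S then v ⟨j, h⟩ else 0)
    (hdiff : Differentiable ℝ (ℓ ∘ ι))
    (hsc : ∀ u v : EuclideanSpace ℝ S,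
      ℓ (ι u) + (inner ℝ (gradient (ℓ ∘ ι) u) (v - u) : ℝ) + (μ / 2) * ‖v - u‖ ^ 2 ≤ ℓ (ι v))
    (a0 τ ρ : ℝ) (ha0 : 0 < a0) (hτ : 0 < τ) (hρ : 0 < ρ)
    (dmax : ℕ) (hdmax : 0 < dmax)
    (orc : Fin D → ℝ)
    (horc0 : ∀ j ∉ S, orc j = 0)
    (horcmin : ∀ β : Fin D → ℝ, (∀ j ∉ S, β j = 0) → ℓ orc ≤ ℓ β) :
    (∀ w : Fin D → ℝ, (∀ j, 0 ≤ w j) → (∀ j ∉ S, w j = 0) →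
      (∀ j, w j ≤ 2 ^ 5 * a0 * τ * ρ ^ 2) →
      l2 w ≤ (2 : ℝ) ^ ((9 : ℝ) / 2) * Real.sqrt dmax * a0 * τ * ρ ^ 2 →
      (∑ j, w j) ≤ 2 ^ 4 * (dmax : ℝ) * a0 * τ * ρ ^ 2 →
      ∀ β : Fin D → ℝ, (∀ j ∉ S, β j = 0) →
        (∀ γ : Fin D → ℝ, (∀ j ∉ S, γ j = 0) →
          ℓ β + (1 / 2) * ∑ j ∈ S, w j * |β j| ≤ ℓ γ + (1 / 2) * ∑ j ∈ S, w j * |γ j|) →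
        l2 (fun j => β j - orc j)
          ≤ (2 : ℝ) ^ ((9 : ℝ) / 2) * a0 * Real.sqrt dmax * τ * ρ ^ 2 / μ) ∧
    (∀ w : Fin D → ℝ, (∀ j, 0 ≤ w j) → (∀ j ∉ S, w j = 0) →
      (∀ j, w j ≤ 2 ^ 5 * a0 * τ * ρ ^ 2) →
      ∀ β : Fin D → ℝ, (∀ j ∉ S, β j = 0) →
        (∀ γ : Fin D → ℝ, (∀ j ∉ S, γ j = 0) →
          ℓ β + (1 / 2) * ∑ j ∈ S, w j * |β j| ≤ ℓ γ + (1 / 2) * ∑ j ∈ S, w j * |γ j|) →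
        l2 (fun j => β j - orc j) ≤ 2 ^ 5 * a0 * Real.sqrt sstar * τ * ρ ^ 2 / μ) :=
  stmt_12_general ℓ S sstar hs μ hμ ι hι hsc a0 τ ρ ha0 hτ dmax orc horc0 horcmin

end FCLS
end

section
/- There exists an absolute constant C > 0 such that the following holds. Let x be a real-valued random variable with mean μ = 𝔼[x] such that x − μ is σ-sub-Gaussian, i.e., P(|x − μ| ≥ t) ≤ 2exp(−t²/(2σ²)) for all t > 0. Then |x| − |μ| is σ-sub-Gaussian in the same sense, i.e., P(||x| − |μ|| ≥ t) ≤ 2exp(−t²/(2σ²)) for all t > 0, and 𝔼[|x| − |μ|] ≤ C(σ + |μ|)·exp(−μ²/(4σ²)). -/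
open scoped BigOperators
open Matrix

namespace FCLS

/-!
With `s = sign 𝔼x`, pointwise `|x| - |𝔼x| ≤ s (x - 𝔼x) + 2 (|x - 𝔼x| - |𝔼x|)⁺`, and the first term has
mean zero. For a σ-sub-Gaussian `y` and `a ≥ 0`, the layer-cake formula, the tail bound at level `a + t`
and `(a + t)² ≥ a² + t²` give `𝔼 (|y| - a)⁺ ≤ √(2π) σ exp(-a²/(2σ²))`.
-/

open MeasureTheory Real Set

lemma abs_sub_abs_le_sign_mul_sub_add (a m : ℝ) :
    |a| - |m| ≤ Real.sign m * (a - m) + 2 * max (|a - m| - |m|) 0 := by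
  have h₁ := le_max_left (|a - m| - |m|) 0
  have h₂ := le_max_right (|a - m| - |m|) 0
  have h₃ := le_abs_self (a - m)
  have h₄ := neg_abs_le (a - m)
  rcases lt_trichotomy m 0 with hm | rfl | hm
  · rw [Real.sign_of_neg hm, abs_of_neg hm] at *
    cases abs_cases a <;> linarith
  · simp only [Real.sign_zero, abs_zero, sub_zero] at *
    linarith [abs_nonneg a]
  · rw [Real.sign_of_pos hm, abs_of_pos hm] at *
    cases abs_cases a <;> linarith

lemma exp_neg_sq_add_le {a t c : ℝ} (ha : 0 ≤ a) (ht : 0 ≤ t) (hc : 0 ≤ c) :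
    exp (-(a + t) ^ 2 / c) ≤ exp (-a ^ 2 / c) * exp (-t ^ 2 / c) := by
  rw [← exp_add, ← add_div]
  gcongr
  nlinarith [mul_nonneg ha ht]

lemma lintegral_Ioi_ofReal_exp_neg_sq {σ : ℝ} (hσ : 0 < σ) :
    ∫⁻ t in Ioi (0 : ℝ), ENNReal.ofReal (exp (-t ^ 2 / (2 * σ ^ 2))) =
      ENNReal.ofReal (√(2 * π) * σ / 2) := by
  have hb : 0 < (2 * σ ^ 2)⁻¹ := by positivity
  have hform : ∀ t : ℝ, -t ^ 2 / (2 * σ ^ 2) = -(2 * σ ^ 2)⁻¹ * t ^ 2 := fun t => by ring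
  simp_rw [hform]
  rw [← ofReal_integral_eq_lintegral_ofReal (integrable_exp_neg_mul_sq hb).integrableOn
    (Filter.Eventually.of_forall fun _ => (exp_pos _).le), integral_gaussian_Ioi,
    div_inv_eq_mul, show π * (2 * σ ^ 2) = 2 * π * σ ^ 2 by ring, sqrt_mul (by positivity),
    sqrt_sq hσ.le]

theorem integral_max_abs_sub_le_of_tail_le {Ω : Type*} [MeasurableSpace Ω] {μ : Measure Ω}
    {y : Ω → ℝ} {σ a : ℝ} (hσ : 0 < σ) (ha : 0 ≤ a) (hy : AEMeasurable y μ)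
    (htail : ∀ t : ℝ, 0 < t →
      μ {ω | t ≤ |y ω|} ≤ ENNReal.ofReal (2 * exp (-t ^ 2 / (2 * σ ^ 2)))) :
    ∫ ω, max (|y ω| - a) 0 ∂μ ≤ √(2 * π) * σ * exp (-a ^ 2 / (2 * σ ^ 2)) := by
  have hf : AEMeasurable (fun ω => max (|y ω| - a) 0) μ := by fun_prop
  have hf_nn : 0 ≤ᵐ[μ] fun ω => max (|y ω| - a) 0 :=
    Filter.Eventually.of_forall fun _ => le_max_right _ _
  rw [integral_eq_lintegral_of_nonneg_ae hf_nn hf.aestronglyMeasurable]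
  refine ENNReal.toReal_le_of_le_ofReal (by positivity) ?_
  rw [lintegral_eq_lintegral_meas_le μ hf_nn hf]
  have hlevel : ∀ t ∈ Ioi (0 : ℝ), μ {ω | t ≤ max (|y ω| - a) 0} ≤
      ENNReal.ofReal (2 * exp (-a ^ 2 / (2 * σ ^ 2))) *
        ENNReal.ofReal (exp (-t ^ 2 / (2 * σ ^ 2))) := by
    intro t (ht : 0 < t)
    have hsub : {ω | t ≤ max (|y ω| - a) 0} ⊆ {ω | a + t ≤ |y ω|} := by
      intro ω (hω : t ≤ max (|y ω| - a) 0)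
      show a + t ≤ |y ω|
      rcases le_max_iff.mp hω with h | h <;> linarith
    calc μ {ω | t ≤ max (|y ω| - a) 0}
        ≤ ENNReal.ofReal (2 * exp (-(a + t) ^ 2 / (2 * σ ^ 2))) :=
          (measure_mono hsub).trans (htail _ (by positivity))
      _ ≤ _ := by
          rw [← ENNReal.ofReal_mul (by positivity), mul_assoc]
          gcongr
          exact exp_neg_sq_add_le ha ht.le (by positivity)
  calc ∫⁻ t in Ioi 0, μ {ω | t ≤ max (|y ω| - a) 0}
      ≤ ∫⁻ t in Ioi 0, ENNReal.ofReal (2 * exp (-a ^ 2 / (2 * σ ^ 2))) *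
          ENNReal.ofReal (exp (-t ^ 2 / (2 * σ ^ 2))) :=
        setLIntegral_mono (by fun_prop) hlevel
    _ = ENNReal.ofReal (√(2 * π) * σ * exp (-a ^ 2 / (2 * σ ^ 2))) := by
        rw [lintegral_const_mul _ (by fun_prop), lintegral_Ioi_ofReal_exp_neg_sq hσ,
          ← ENNReal.ofReal_mul (by positivity)]
        ring_nf

theorem integral_abs_sub_abs_integral_le {Ω : Type*} [MeasurableSpace Ω] {μ : Measure Ω}
    [IsProbabilityMeasure μ] {x : Ω → ℝ} (hx : Integrable x μ) :
    ∫ ω, (|x ω| - |∫ ω', x ω' ∂μ|) ∂μ ≤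
      2 * ∫ ω, max (|x ω - ∫ ω', x ω' ∂μ| - |∫ ω', x ω' ∂μ|) 0 ∂μ := by
  set m := ∫ ω, x ω ∂μ
  have hxm : Integrable (fun ω => x ω - m) μ := hx.sub (integrable_const m)
  have hexcess : Integrable (fun ω => max (|x ω - m| - |m|) 0) μ :=
    (hxm.abs.sub (integrable_const _)).pos_part
  have hcentered : ∫ ω, (x ω - m) ∂μ = 0 := by
    rw [integral_sub hx (integrable_const m), integral_const, probReal_univ, one_smul, sub_self]
  calc ∫ ω, (|x ω| - |m|) ∂μ
      ≤ ∫ ω, (Real.sign m * (x ω - m) + 2 * max (|x ω - m| - |m|) 0) ∂μ :=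
        integral_mono (hx.abs.sub (integrable_const _))
          ((hxm.const_mul _).add (hexcess.const_mul 2))
          fun ω => abs_sub_abs_le_sign_mul_sub_add (x ω) m
    _ = 2 * ∫ ω, max (|x ω - m| - |m|) 0 ∂μ := by
        rw [integral_add (hxm.const_mul _) (hexcess.const_mul 2), integral_const_mul,
          integral_const_mul, hcentered, mul_zero, zero_add]

open MeasureTheory in
/-- sub-Gaussianity of `|x| − |𝔼x|` and the improved bound on its mean. -/
theorem stmt_13 : ∃ C : ℝ, 0 < C ∧
    ∀ (Ω : Type) [MeasurableSpace Ω] (μ : Measure Ω), IsProbabilityMeasure μ →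
    ∀ (x : Ω → ℝ) (σ : ℝ), 0 < σ → Integrable x μ →
    ∀ m : ℝ, m = ∫ ω, x ω ∂μ →
    (∀ t : ℝ, 0 < t →
      μ {ω | t ≤ |x ω - m|} ≤ ENNReal.ofReal (2 * Real.exp (-t ^ 2 / (2 * σ ^ 2)))) →
    (∀ t : ℝ, 0 < t →
      μ {ω | t ≤ abs (|x ω| - |m|)} ≤ ENNReal.ofReal (2 * Real.exp (-t ^ 2 / (2 * σ ^ 2)))) ∧
    (∫ ω, (|x ω| - |m|) ∂μ) ≤ C * (σ + |m|) * Real.exp (-m ^ 2 / (4 * σ ^ 2)) := by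
  refine ⟨2 * √(2 * π), by positivity, ?_⟩
  rintro Ω _ μ _ x σ hσ hx m hm htail
  refine ⟨fun t ht => (measure_mono fun ω (hω : t ≤ _) => ?_).trans (htail t ht), ?_⟩
  · exact hω.trans (abs_abs_sub_abs_le_abs_sub _ _)
  have hdecay : exp (-m ^ 2 / (2 * σ ^ 2)) ≤ exp (-m ^ 2 / (4 * σ ^ 2)) := by
    rw [exp_le_exp, div_le_div_iff₀ (by positivity) (by positivity)]
    nlinarith [mul_nonneg (sq_nonneg m) (sq_nonneg σ)]
  calc ∫ ω, (|x ω| - |m|) ∂μ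
      ≤ 2 * ∫ ω, max (|x ω - m| - |m|) 0 ∂μ := hm ▸ integral_abs_sub_abs_integral_le hx
    _ ≤ 2 * (√(2 * π) * σ * exp (-|m| ^ 2 / (2 * σ ^ 2))) := by
        gcongr
        exact integral_max_abs_sub_le_of_tail_le hσ (abs_nonneg m)
          (hx.aemeasurable.sub_const m) htail
    _ ≤ 2 * √(2 * π) * (σ + |m|) * exp (-m ^ 2 / (4 * σ ^ 2)) := by
        rw [sq_abs, ← mul_assoc, ← mul_assoc]
        gcongr
        linarith [abs_nonneg m]

end FCLS
end

section
/- Let β* ∈ ℝ^D with support N* = {ℓ : β*_ℓ ≠ 0} of size s₀, and let m* = min_{ℓ∈N*} |β*_ℓ|. Let β̃ be a random vector in ℝ^D whose entries satisfy the sub-Gaussian residual tail condition P(|β̃_ℓ − β*_ℓ| > t) ≤ 2exp(−n t²/(2σ²)) for all t > 0 and all ℓ ∈ [D]. Let HT_γ be the hard-thresholding operator, HT_γ(x)_ℓ = x_ℓ·1{|x_ℓ| > γ}, and let β̂^{ew-orc} be the entrywise oracle given by β̂^{ew-orc}_ℓ = β̃_ℓ for ℓ ∈ N* and β̂^{ew-orc}_ℓ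 = 0 for ℓ ∉ N*. Then, for any γ > 0, P(HT_γ(β̃) ≠ β̂^{ew-orc}) ≤ 2s₀·exp(−n·[m* − γ]_+²/(2σ²)) + 2(D − s₀)·exp(−n γ²/(2σ²)). -/
/-!
On the support, thresholding zeroes `β̃_ℓ` only if `|β̃_ℓ| ≤ γ`, which forces a residual
`|β̃_ℓ - β*_ℓ| ≥ m* - γ`; off the support, it keeps `β̃_ℓ = β̃_ℓ - β*_ℓ` only if that residual
exceeds `γ`. A union bound over the coordinates, with the strict tail bound passed to the closed
tail by continuity in the level, gives the estimate.
-/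

open scoped BigOperators
open Matrix

namespace FCLS

open MeasureTheory Filter Topology

section TailBounds

variable {Ω : Type*} [MeasurableSpace Ω] (μ : Measure Ω) {X : Ω → ℝ} {f : ℝ → ℝ} {t : ℝ}

theorem measure_le_le_ofReal_of_forall_lt (ht : 0 < t) (hf : ContinuousAt f t)
    (hX : ∀ s, 0 < s → μ {ω | s < X ω} ≤ ENNReal.ofReal (f s)) :
    μ {ω | t ≤ X ω} ≤ ENNReal.ofReal (f t) := by
  have hlim : Tendsto (fun s => ENNReal.ofReal (f s)) (𝓝[<] t) (𝓝 (ENNReal.ofReal (f t))) :=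
    (ENNReal.continuous_ofReal.tendsto _).comp (hf.tendsto.mono_left nhdsWithin_le_nhds)
  refine ge_of_tendsto hlim ?_
  filter_upwards [Ioo_mem_nhdsLT ht] with s hs
  exact (measure_mono fun ω (hω : t ≤ X ω) => hs.2.trans_le hω).trans (hX s hs.1)

theorem measure_le_le_ofReal_of_forall_lt_of_one_le [IsProbabilityMeasure μ] (ht : 0 ≤ t)
    (hf₀ : 1 ≤ f 0) (hf : ContinuousAt f t)
    (hX : ∀ s, 0 < s → μ {ω | s < X ω} ≤ ENNReal.ofReal (f s)) :
    μ {ω | t ≤ X ω} ≤ ENNReal.ofReal (f t) := by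
  rcases ht.eq_or_lt with rfl | ht
  · exact prob_le_one.trans (ENNReal.one_le_ofReal.mpr hf₀)
  · exact measure_le_le_ofReal_of_forall_lt μ ht hf hX

end TailBounds

theorem sum_ite_eq_card_mul_add {ι R : Type*} [Fintype ι] [CommRing R] (p : ι → Prop)
    [DecidablePred p] (a b : R) :
    ∑ i, (if p i then a else b) =
      Nat.card {i // p i} * a + ((Fintype.card ι : R) - Nat.card {i // p i}) * b := by
  classical
  rw [Finset.sum_ite, Finset.sum_const, Finset.sum_const, nsmul_eq_mul, nsmul_eq_mul,
    Nat.card_eq_fintype_card, Fintype.card_subtype, Finset.filter_not, Finset.card_sdiff,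
    Finset.inter_univ, Finset.card_univ, Nat.cast_sub (Finset.card_le_univ _)]

theorem abs_sub_large_of_hardThreshold_ne_oracle {x b γ m : ℝ} (hm : b ≠ 0 → m ≤ |b|)
    (h : (if γ < |x| then x else 0) ≠ (if b ≠ 0 then x else 0)) :
    if b ≠ 0 then max (m - γ) 0 ≤ |x - b| else γ < |x - b| := by
  by_cases hb : b = 0
  · subst hb
    by_cases hx : γ < |x|
    · simpa using hx
    · simp [hx] at h
  · by_cases hx : γ < |x|
    · simp [hx, hb] at h
    · rw [if_pos hb]
      have hrev := abs_sub_abs_le_abs_sub b x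
      exact max_le (by rw [abs_sub_comm]; linarith [hm hb]) (abs_nonneg _)

open MeasureTheory in
theorem stmt_16_general {D : ℕ}
    (Ω : Type) [MeasurableSpace Ω] (μ : Measure Ω) [IsProbabilityMeasure μ]
    (n : ℕ) (σ : ℝ)
    (βstar : Fin D → ℝ)
    (s0 : ℕ) (hs0 : s0 = Nat.card {ℓ : Fin D // βstar ℓ ≠ 0})
    (mstar : ℝ) (hmstar : mstar = ⨅ ℓ : {ℓ : Fin D // βstar ℓ ≠ 0}, |βstar ℓ.1|)
    (βtil : Ω → Fin D → ℝ)
    (htail : ∀ (ℓ : Fin D) (t : ℝ), 0 < t →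
      μ {ω | t < |βtil ω ℓ - βstar ℓ|}
        ≤ ENNReal.ofReal (2 * Real.exp (-(n * t ^ 2) / (2 * σ ^ 2))))
    (γ : ℝ) (hγ : 0 < γ) :
    μ {ω | (fun ℓ => if γ < |βtil ω ℓ| then βtil ω ℓ else 0)
          ≠ (fun ℓ => if βstar ℓ ≠ 0 then βtil ω ℓ else 0)}
      ≤ ENNReal.ofReal
          (2 * s0 * Real.exp (-(n * (max (mstar - γ) 0) ^ 2) / (2 * σ ^ 2))
            + 2 * ((D : ℝ) - s0) * Real.exp (-(n * γ ^ 2) / (2 * σ ^ 2))) := by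
  let tail : ℝ → ℝ := fun t => 2 * Real.exp (-(n * t ^ 2) / (2 * σ ^ 2))
  have hm : ∀ ℓ, βstar ℓ ≠ 0 → mstar ≤ |βstar ℓ| := fun ℓ hℓ => hmstar ▸
    ciInf_le (f := fun ℓ : {ℓ // βstar ℓ ≠ 0} => |βstar ℓ.1|) (Set.finite_range _).bddBelow ⟨ℓ, hℓ⟩
  let bad (ℓ : Fin D) : Set Ω := {ω | if βstar ℓ ≠ 0 then max (mstar - γ) 0 ≤ |βtil ω ℓ - βstar ℓ|
    else γ < |βtil ω ℓ - βstar ℓ|}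
  have hbad : ∀ ℓ, μ (bad ℓ) ≤
      ENNReal.ofReal (if βstar ℓ ≠ 0 then tail (max (mstar - γ) 0) else tail γ) := by
    intro ℓ
    by_cases hℓ : βstar ℓ ≠ 0
    · simp only [bad, if_pos hℓ]
      exact measure_le_le_ofReal_of_forall_lt_of_one_le μ (le_max_right _ _) (by simp [tail])
        (by fun_prop) (htail ℓ)
    · simp only [bad, if_neg hℓ]
      exact htail ℓ γ hγ
  calc _ ≤ μ (⋃ ℓ, bad ℓ) := measure_mono fun ω hω => by
        obtain ⟨ℓ, hℓ⟩ := Function.ne_iff.mp hω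
        exact Set.mem_iUnion.mpr ⟨ℓ, abs_sub_large_of_hardThreshold_ne_oracle (hm ℓ) hℓ⟩
    _ ≤ ∑ ℓ, μ (bad ℓ) := measure_iUnion_fintype_le μ bad
    _ ≤ ∑ ℓ, ENNReal.ofReal (if βstar ℓ ≠ 0 then tail (max (mstar - γ) 0) else tail γ) :=
        Finset.sum_le_sum fun ℓ _ => hbad ℓ
    _ = _ := by
        rw [← ENNReal.ofReal_sum_of_nonneg fun ℓ _ => by split_ifs <;> positivity,
          sum_ite_eq_card_mul_add, Fintype.card_fin, ← hs0]
        simp only [tail]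
        congr 1
        ring

open MeasureTheory in
/-- with high probability, hard thresholding recovers the entrywise
oracle estimator. -/
theorem stmt_16 {D : ℕ}
    (Ω : Type) [MeasurableSpace Ω] (μ : Measure Ω) [IsProbabilityMeasure μ]
    (n : ℕ) (hn : 0 < n) (σ : ℝ) (hσ : 0 < σ)
    (βstar : Fin D → ℝ)
    (s0 : ℕ) (hs0 : s0 = Nat.card {ℓ : Fin D // βstar ℓ ≠ 0})
    (mstar : ℝ) (hmstar : mstar = ⨅ ℓ : {ℓ : Fin D // βstar ℓ ≠ 0}, |βstar ℓ.1|)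
    (βtil : Ω → Fin D → ℝ)
    (htail : ∀ (ℓ : Fin D) (t : ℝ), 0 < t →
      μ {ω | t < |βtil ω ℓ - βstar ℓ|}
        ≤ ENNReal.ofReal (2 * Real.exp (-(n * t ^ 2) / (2 * σ ^ 2))))
    (γ : ℝ) (hγ : 0 < γ) :
    μ {ω | (fun ℓ => if γ < |βtil ω ℓ| then βtil ω ℓ else 0)
          ≠ (fun ℓ => if βstar ℓ ≠ 0 then βtil ω ℓ else 0)}
      ≤ ENNReal.ofReal
          (2 * s0 * Real.exp (-(n * (max (mstar - γ) 0) ^ 2) / (2 * σ ^ 2))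
            + 2 * ((D : ℝ) - s0) * Real.exp (-(n * γ ^ 2) / (2 * σ ^ 2))) :=
  stmt_16_general Ω μ n σ βstar s0 hs0 mstar hmstar βtil htail γ hγ

end FCLS
end
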